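/- arXiv:2604.21900 — 2 statements merged into one kernel-verified Lean document; each statement's English description precedes it below -/
import Mathlib

section
/- Every complex eigenvalue λ of the matrix A := A₃·A₂·A₁ (viewed as a matrix over ℂ) satisfies |λ| = 1 if and only if Δ₁² + Δ₂² + Δ₃² − Δ₁Δ₂Δ₃ ∈ {0, 1, 2, 3, 4}. -/
/-!
Periodicity makes `A` a matrix in `a = Δ₁, b = Δ₂, c = Δ₃` alone, with characteristic polynomial
`(X - 1) (X² - (2 - κ) X + 1)`, `κ = a² + b² + c² - abc`. For real `t`, a root `z` of the
palindromic quadratic `X² - t X + 1` with `‖z‖ = 1` has `z⁻¹ = z̄`, so `t = z + z̄ = 2 Re z` and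
`|t| ≤ 2`. Conversely, if `|t| ≤ 2` the two roots are either complex conjugates with product `1`,
or real, in which case the discriminant `t² - 4 ≤ 0` vanishes and the root is `t / 2 = ±1`.
Finally `|2 - κ| ≤ 2` means `κ ∈ {0, …, 4}`.
-/

open Matrix Polynomial

/-- The matrix `A_j` with rows `(0,1,0)`, `(0,0,1)`, `(1, −Δ_j, Δ_{j+2})`. -/
def helixMatrix (Δ : ℤ → ℤ) (j : ℤ) : Matrix (Fin 3) (Fin 3) ℤ :=
  !![0, 1, 0; 0, 0, 1; 1, -Δ j, Δ (j + 2)]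

/-- The matrix `A := A₃ * A₂ * A₁`. -/
def helixA (Δ : ℤ → ℤ) : Matrix (Fin 3) (Fin 3) ℤ :=
  helixMatrix Δ 3 * helixMatrix Δ 2 * helixMatrix Δ 1

open ComplexConjugate

namespace Complex

theorem norm_eq_one_of_sq_sub_mul_add_one_eq_zero {c : ℝ} (hc : |c| ≤ 2) {z : ℂ}
    (hz : z ^ 2 - c * z + 1 = 0) : ‖z‖ = 1 := by
  have hz' : conj z ^ 2 - c * conj z + 1 = 0 := by simpa using congrArg conj hz
  have hsplit : (z - conj z) * (z + conj z - c) = 0 := by linear_combination hz - hz'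
  rcases mul_eq_zero.1 hsplit with hreal | hsum
  · obtain ⟨x, rfl⟩ : ∃ x : ℝ, z = x := conj_eq_iff_real.1 (sub_eq_zero.1 hreal).symm
    have hx : x ^ 2 - c * x + 1 = 0 := by exact_mod_cast hz
    have hc2 : c ^ 2 ≤ 4 := by nlinarith [abs_nonneg c, sq_abs c]
    have hx2 : x ^ 2 = 1 := by nlinarith [sq_nonneg (2 * x - c)]
    rw [norm_real, Real.norm_eq_abs, ← pow_eq_one_iff_of_nonneg (abs_nonneg x) two_ne_zero,
      sq_abs, hx2]
  · have hmul : z * conj z = 1 := by linear_combination z * hsum - hz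
    rw [mul_conj, ← ofReal_one, ofReal_inj, normSq_eq_norm_sq] at hmul
    exact (pow_eq_one_iff_of_nonneg (norm_nonneg z) two_ne_zero).1 hmul

theorem abs_le_two_of_sq_sub_mul_add_one_eq_zero {c : ℝ} {z : ℂ}
    (hz : z ^ 2 - c * z + 1 = 0) (hz1 : ‖z‖ = 1) : |c| ≤ 2 := by
  have hz0 : z ≠ 0 := norm_ne_zero_iff.1 (hz1 ▸ one_ne_zero)
  have hc : c = 2 * z.re := by
    rw [← ofReal_inj, ← add_conj, ← inv_eq_conj hz1]
    field_simp
    linear_combination -hz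
  calc |c| = 2 * |z.re| := by rw [hc, abs_mul, abs_two]
    _ ≤ 2 * ‖z‖ := by gcongr; exact abs_re_le_norm z
    _ = 2 := by rw [hz1, mul_one]

theorem forall_norm_eq_one_of_sq_sub_mul_add_one_eq_zero_iff (c : ℝ) :
    (∀ z : ℂ, z ^ 2 - c * z + 1 = 0 → ‖z‖ = 1) ↔ |c| ≤ 2 := by
  refine ⟨fun h => ?_, fun hc z hz => norm_eq_one_of_sq_sub_mul_add_one_eq_zero hc hz⟩
  obtain ⟨z, hz⟩ := exists_quadratic_eq_zero one_ne_zero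
    (IsAlgClosed.exists_eq_mul_self (discrim 1 (-(c : ℂ)) 1))
  have hz' : z ^ 2 - c * z + 1 = 0 := by linear_combination hz
  exact abs_le_two_of_sq_sub_mul_add_one_eq_zero hz' (h z hz')

end Complex

theorem helixA_eq {Δ : ℤ → ℤ} (hper : ∀ i : ℤ, Δ (i + 3) = Δ i) :
    helixA Δ = !![1, -Δ 1, Δ 3;
      Δ 1, 1 - Δ 1 ^ 2, Δ 1 * Δ 3 - Δ 2;
      Δ 1 * Δ 2 - Δ 3, Δ 2 + Δ 1 * Δ 3 - Δ 1 ^ 2 * Δ 2, 1 - Δ 2 ^ 2 - Δ 3 ^ 2 + Δ 1 * Δ 2 * Δ 3] := by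
  have h4 : Δ 4 = Δ 1 := hper 1
  have h5 : Δ 5 = Δ 2 := hper 2
  ext i j
  fin_cases i <;> fin_cases j <;> simp [helixA, helixMatrix, h4, h5] <;> ring

theorem helixA_charpoly {Δ : ℤ → ℤ} (hper : ∀ i : ℤ, Δ (i + 3) = Δ i) :
    (helixA Δ).charpoly = (X - 1) *
      (X ^ 2 - C (2 - (Δ 1 ^ 2 + Δ 2 ^ 2 + Δ 3 ^ 2 - Δ 1 * Δ 2 * Δ 3)) * X + 1) := by
  rw [helixA_eq hper, Matrix.charpoly, Matrix.det_fin_three]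
  simp only [charmatrix_apply_eq, charmatrix_apply_ne, of_apply, cons_val', cons_val_zero,
    cons_val_one, cons_val, cons_val_fin_one, ne_eq, Fin.reduceEq, not_false_eq_true, eq_intCast,
    Int.cast_one, Int.cast_neg, Int.cast_sub, Int.cast_add, Int.cast_mul, Int.cast_pow]
  ring

/-- All complex eigenvalues of `A := A₃·A₂·A₁` have modulus 1 if and only if
`Δ₁² + Δ₂² + Δ₃² − Δ₁Δ₂Δ₃ ∈ {0, 1, 2, 3, 4}`. -/
theorem helixA_eigenvalues_modulus_one (Δ : ℤ → ℤ) (hper : ∀ i : ℤ, Δ (i + 3) = Δ i) :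
    (∀ lam : ℂ, ((helixA Δ).map (Int.cast : ℤ → ℂ)).charpoly.IsRoot lam →
        ‖lam‖ = 1) ↔
      Δ 1 ^ 2 + Δ 2 ^ 2 + Δ 3 ^ 2 - Δ 1 * Δ 2 * Δ 3 ∈ ({0, 1, 2, 3, 4} : Set ℤ) := by
  set κ := Δ 1 ^ 2 + Δ 2 ^ 2 + Δ 3 ^ 2 - Δ 1 * Δ 2 * Δ 3
  have hroots (lam : ℂ) : ((helixA Δ).map (Int.cast : ℤ → ℂ)).charpoly.IsRoot lam ↔
      lam = 1 ∨ lam ^ 2 - ((2 - κ : ℤ) : ℝ) * lam + 1 = 0 := by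
    change ((helixA Δ).map (Int.castRingHom ℂ)).charpoly.IsRoot lam ↔ _
    rw [charpoly_map, helixA_charpoly hper]
    simp [sub_eq_zero, κ]
  have hκ : |((2 - κ : ℤ) : ℝ)| ≤ 2 ↔ κ ∈ ({0, 1, 2, 3, 4} : Set ℤ) := by
    rw [← Int.cast_abs, show (2 : ℝ) = (2 : ℤ) by norm_num, Int.cast_le, abs_le]
    simp only [Set.mem_insert_iff, Set.mem_singleton_iff]
    omega
  simp only [hroots, or_imp, forall_and, forall_eq, norm_one, true_and]
  rw [Complex.forall_norm_eq_one_of_sq_sub_mul_add_one_eq_zero_iff, hκ]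
end

section
/- Let a, r₀, r₂ be positive integers with r₀ ≥ a + 1, r₂ ≥ a + 1, and r₀ + r₂ > a² + a + 1. Let Δ : ℤ → ℤ be the 3-periodic sequence with Δ₁ = Δ₂ = r₀ + r₂ + a and Δ₃ = a·(r₀ + r₂ + a), and let r : ℤ → ℤ satisfy the rank recursion with initial values r(0) = r₀, r(1) = 1, r(2) = r₂. Then for every i ∈ ℤ, r(i) ≥ 1 and Δ_{i−1}·r(i−1) − r(i−2) > 0. (This is the numerical content of the statement that the numerical seed ((−r₀−r₂−a, r₀), (0,1), (r₀+r₂+a, r₂)) generates an elliptic helix.) -/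
/-!
Put `S = r₀ + r₂ + a` and `c = a + 1`. Then `Δ` takes the values `a S, S, S` along the residues
mod 3, and `S > (a + 1) ^ 2` gives the gap `c ^ 2 ≤ c Δᵢ - Δᵢ₊₁` for every `i`. This gap makes the
ratio bound `c rᵢ₊₁ ≤ rᵢ₊₂` propagate forward through the rank recursion; the seed satisfies it
since `r₂ ≥ a + 1`, and a sequence growing in this way has positive ranks and positive mutation
ranks. As `Δ` is even, `j ↦ r (2 - j)` satisfies the same recursion, with `r₀` and `r₂` swapped
in the seed, so the same argument covers the indices `i ≤ 1`.
-/

def RankRecursion (Δ r : ℤ → ℤ) : Prop :=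
  ∀ i : ℤ, r (i + 3) = r i - Δ (i + 1) * r (i + 1) + Δ i * r (i + 2)

def mutationRank (Δ r : ℤ → ℤ) (i : ℤ) : ℤ :=
  Δ (i - 1) * r (i - 1) - r (i - 2)

def IsHelixAt (Δ r : ℤ → ℤ) (i : ℤ) : Prop :=
  1 ≤ r (i - 1) ∧ 1 ≤ r i ∧ 0 < mutationRank Δ r i

def GrowsAt (c : ℤ) (Δ r : ℤ → ℤ) (i : ℤ) : Prop :=
  0 ≤ r i ∧ 1 ≤ r (i + 1) ∧ c * r (i + 1) ≤ r (i + 2) ∧ r i < Δ (i + 1) * r (i + 1)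

namespace RankRecursion

variable {Δ r : ℤ → ℤ}

theorem mutationRank_eq (h : RankRecursion Δ r) (i : ℤ) :
    mutationRank Δ r i = Δ (i - 2) * r i - r (i + 1) := by
  have := h (i - 2)
  rw [show i - 2 + 3 = i + 1 by ring, show i - 2 + 1 = i - 1 by ring,
    show i - 2 + 2 = i by ring] at this
  rw [mutationRank, this]
  ring

theorem reflect {n : ℤ} (hΔ : ∀ i, Δ (n - 2 - i) = Δ i) (h : RankRecursion Δ r) :
    RankRecursion Δ (fun j => r (n - j)) := by
  intro j
  have e := h (n - j - 3)
  have d₀ : Δ (n - j - 3 + 1) = Δ j := by rw [← hΔ j]; ring_nf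
  have d₁ : Δ (n - j - 3) = Δ (j + 1) := by rw [← hΔ (j + 1)]; ring_nf
  rw [d₀, d₁, show n - j - 3 + 3 = n - j by ring] at e
  simp only [show n - (j + 3) = n - j - 3 by ring, show n - (j + 1) = n - j - 3 + 2 by ring,
    show n - (j + 2) = n - j - 3 + 1 by ring]
  linarith

theorem mutationRank_reflect {n : ℤ} (hΔ : ∀ i, Δ (n - 2 - i) = Δ i) (h : RankRecursion Δ r)
    (j : ℤ) : mutationRank Δ (fun j => r (n - j)) j = mutationRank Δ r (n + 1 - j) := by
  rw [h.mutationRank_eq, mutationRank, ← hΔ (j - 1)]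
  ring_nf

theorem isHelixAt_reflect {n : ℤ} (hΔ : ∀ i, Δ (n - 2 - i) = Δ i) (h : RankRecursion Δ r)
    (j : ℤ) : IsHelixAt Δ (fun j => r (n - j)) j ↔ IsHelixAt Δ r (n + 1 - j) := by
  rw [IsHelixAt, IsHelixAt, h.mutationRank_reflect hΔ, show n - (j - 1) = n + 1 - j by ring,
    show n + 1 - j - 1 = n - j by ring, and_left_comm]

variable {c : ℤ} (h : RankRecursion Δ r) (hc : 1 ≤ c) (hΔ : ∀ i, 2 ≤ Δ i)
  (hgap : ∀ i, c ^ 2 ≤ c * Δ i - Δ (i + 1))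
include h hc hΔ hgap

theorem growsAt_succ {i : ℤ} (hi : GrowsAt c Δ r i) : GrowsAt c Δ r (i + 1) := by
  obtain ⟨h₀, h₁, h₁₂, -⟩ := hi
  have h₂ : r (i + 1) ≤ r (i + 2) := by nlinarith
  have h₂₃ : c * r (i + 2) ≤ r (i + 3) := by
    have key : c * (c * r (i + 2)) ≤ c * r (i + 3) := calc
      c * (c * r (i + 2)) = c ^ 2 * r (i + 2) := by ring
      _ ≤ (c * Δ i - Δ (i + 1)) * r (i + 2) := mul_le_mul_of_nonneg_right (hgap i) (by linarith)
      _ ≤ c * r i - c * Δ (i + 1) * r (i + 1) + c * Δ i * r (i + 2) := by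
        nlinarith [hΔ (i + 1)]
      _ = c * r (i + 3) := by rw [h i]; ring
    exact le_of_mul_le_mul_left key (by linarith)
  rw [GrowsAt, show i + 1 + 1 = i + 2 by ring, show i + 1 + 2 = i + 3 by ring]
  exact ⟨by linarith, by linarith, h₂₃, by nlinarith [hΔ (i + 2)]⟩

theorem growsAt_of_le {m i : ℤ} (hm : GrowsAt c Δ r m) (hi : m ≤ i) : GrowsAt c Δ r i := by
  induction i, hi using Int.leInduction with
  | base => exact hm
  | succ i _ ih => exact h.growsAt_succ hc hΔ hgap ih

theorem isHelixAt_of_growsAt_zero (h₀ : GrowsAt c Δ r 0) {i : ℤ} (hi : 2 ≤ i) :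
    IsHelixAt Δ r i := by
  obtain ⟨-, hr, -, hm⟩ := h.growsAt_of_le hc hΔ hgap h₀ (show 0 ≤ i - 2 by omega)
  obtain ⟨-, hr', -, -⟩ := h.growsAt_of_le hc hΔ hgap h₀ (show 0 ≤ i - 1 by omega)
  rw [show i - 2 + 1 = i - 1 by ring] at hr hm
  rw [show i - 1 + 1 = i by ring] at hr'
  exact ⟨hr, hr', by rw [mutationRank]; linarith⟩

theorem isHelixAt (hsymm : ∀ i, Δ (-i) = Δ i) (h₀ : GrowsAt c Δ r 0)
    (h₀' : GrowsAt c Δ (fun j => r (2 - j)) 0) (i : ℤ) : IsHelixAt Δ r i := by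
  have hsymm' : ∀ i, Δ (2 - 2 - i) = Δ i := by simpa using hsymm
  rcases le_or_gt 2 i with hi | hi
  · exact h.isHelixAt_of_growsAt_zero hc hΔ hgap h₀ hi
  · have := (h.reflect hsymm').isHelixAt_of_growsAt_zero hc hΔ hgap h₀' (i := 3 - i) (by omega)
    rwa [h.isHelixAt_reflect hsymm', show 2 + 1 - (3 - i) = i by ring] at this

end RankRecursion

theorem Function.Periodic.eq_ite_of_three {Δ : ℤ → ℤ} {s t : ℤ} (hper : Function.Periodic Δ 3)
    (h₀ : Δ 0 = t) (h₁ : Δ 1 = s) (h₂ : Δ 2 = s) (i : ℤ) : Δ i = if 3 ∣ i then t else s := by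
  rw [← hper.sub_int_mul_eq (i / 3), Int.cast_id, show i - i / 3 * 3 = i % 3 by omega]
  rcases (by omega : i % 3 = 0 ∨ i % 3 = 1 ∨ i % 3 = 2) with h | h | h <;>
    simp [h, h₀, h₁, h₂, Int.dvd_iff_emod_eq_zero]

/-- The numerical seed `((−r₀−r₂−a, r₀), (0,1), (r₀+r₂+a, r₂))` generates an elliptic
helix: with `Δ₁ = Δ₂ = r₀+r₂+a`, `Δ₃ = a(r₀+r₂+a)` extended 3-periodically and `r`
satisfying the rank recursion with `r(0) = r₀`, `r(1) = 1`, `r(2) = r₂`, all ranks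
`r(i)` are at least 1 and all mutation ranks `Δ_{i−1}·r(i−1) − r(i−2)` are positive. -/
theorem seed_generates_helix_equigen (a r₀ r₂ : ℤ)
    (ha : 1 ≤ a) (h0 : a + 1 ≤ r₀) (h2 : a + 1 ≤ r₂)
    (hsum : a ^ 2 + a + 1 < r₀ + r₂)
    (Δ : ℤ → ℤ) (hΔper : ∀ i : ℤ, Δ (i + 3) = Δ i)
    (hΔ1 : Δ 1 = r₀ + r₂ + a) (hΔ2 : Δ 2 = r₀ + r₂ + a)
    (hΔ3 : Δ 3 = a * (r₀ + r₂ + a))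
    (r : ℤ → ℤ)
    (hrec : ∀ i : ℤ, r (i + 3) = r i - Δ (i + 1) * r (i + 1) + Δ i * r (i + 2))
    (hr0 : r 0 = r₀) (hr1 : r 1 = 1) (hr2 : r 2 = r₂) :
    ∀ i : ℤ, 1 ≤ r i ∧ 0 < Δ (i - 1) * r (i - 1) - r (i - 2) := by
  set S := r₀ + r₂ + a
  have hS : (a + 1) ^ 2 < S := by nlinarith
  have hΔ0 : Δ 0 = a * S := by rw [← hΔ3, ← hΔper 0, zero_add]
  have hΔ := Function.Periodic.eq_ite_of_three hΔper hΔ0 hΔ1 hΔ2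
  have hΔ_ge : ∀ i, 2 ≤ Δ i := fun i => by rw [hΔ]; split_ifs <;> nlinarith
  have hsymm : ∀ i, Δ (-i) = Δ i := fun i => by simp only [hΔ, Int.dvd_neg]
  have hgap : ∀ i, (a + 1) ^ 2 ≤ (a + 1) * Δ i - Δ (i + 1) := fun i => by
    rw [hΔ, hΔ]
    split_ifs <;> first | omega | nlinarith
  have key := RankRecursion.isHelixAt hrec (by linarith) hΔ_ge hgap hsymm
    (by refine ⟨?_, ?_, ?_, ?_⟩ <;> norm_num [hr0, hr1, hr2, hΔ1] <;> linarith)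
    (by refine ⟨?_, ?_, ?_, ?_⟩ <;> norm_num [hr0, hr1, hr2, hΔ1] <;> linarith)
  exact fun i => ⟨(key i).2.1, (key i).2.2⟩
end
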